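/- Let S be a right zero (or left zero) semigroup and ω a weight on S. Then the following are equivalent: (i) ℓ¹(S, ω) is pseudo-amenable; (ii) S is a singleton; (iii) ℓ¹(S, ω) is amenable. -/

import Mathlib

open scoped TensorProduct
open Filter
open scoped Classical

/-- A weight on a semigroup: strictly positive and submultiplicative. -/
def IsWeight {S : Type*} [Mul S] (ω : S → ℝ) : Prop :=
  (∀ s, 0 < ω s) ∧ ∀ s t, ω (s * t) ≤ ω s * ω t

/-- A characterization of the Beurling algebra `ℓ¹(S, ω)`: a Banach algebra `A`
together with point masses `delta` and coefficient functionals such that every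
element is the ℓ¹-sum of its coefficients against the point masses, with the
weighted ℓ¹-norm, and `delta` is multiplicative (`δ_s * δ_t = δ_{st}`). -/
structure BeurlingStructure (S : Type*) [Mul S] (ω : S → ℝ) (A : Type*)
    [NormedRing A] [NormedAlgebra ℂ A] where
  delta : S → A
  coeff : A →ₗ[ℂ] (S → ℂ)
  delta_mul : ∀ s t : S, delta s * delta t = delta (s * t)
  coeff_delta : ∀ s t : S, coeff (delta s) t = if t = s then 1 else 0
  hasSum_coeff : ∀ a : A, HasSum (fun s => coeff a s • delta s) a
  norm_eq : ∀ a : A, ‖a‖ = ∑' s, ‖coeff a s‖ * ω s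

/-- A pair of commuting continuous left/right module actions of a Banach algebra,
making `E` a Banach `A`-bimodule. -/
def IsBimodule {A : Type*} [NormedRing A] [NormedAlgebra ℂ A]
    {E : Type*} [NormedAddCommGroup E] [NormedSpace ℂ E]
    (l r : A →L[ℂ] E →L[ℂ] E) : Prop :=
  (∀ a b : A, l (a * b) = (l a).comp (l b)) ∧
  (∀ a b : A, r (a * b) = (r b).comp (r a)) ∧
  (∀ a b : A, (l a).comp (r b) = (r b).comp (l a))

/-- Amenability of a Banach algebra: every bounded derivation into the dual of a
Banach bimodule is inner.  (The dual bimodule actions are `(a·f)(x) = f(x·a)` and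
`(f·a)(x) = f(a·x)`.) -/
def IsAmenable (A : Type*) [NormedRing A] [NormedAlgebra ℂ A] : Prop :=
  ∀ (E : Type) [NormedAddCommGroup E] [NormedSpace ℂ E]
    (l r : A →L[ℂ] E →L[ℂ] E), IsBimodule l r →
    ∀ D : A →L[ℂ] (E →L[ℂ] ℂ),
      (∀ a b : A, D (a * b) = (D b).comp (r a) + (D a).comp (l b)) →
      ∃ f : E →L[ℂ] ℂ, ∀ a : A, D a = f.comp (r a) - f.comp (l a)

/-- The projective tensor norm of an element of the algebraic tensor product. -/
noncomputable def projNorm (A B : Type*) [NormedAddCommGroup A] [NormedSpace ℂ A]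
    [NormedAddCommGroup B] [NormedSpace ℂ B] (u : A ⊗[ℂ] B) : ℝ :=
  sInf {r : ℝ | ∃ (n : ℕ) (f : Fin n → A) (g : Fin n → B),
    u = ∑ i, f i ⊗ₜ[ℂ] g i ∧ r = ∑ i, ‖f i‖ * ‖g i‖}

/-- Left action `a • (x ⊗ y) = (a*x) ⊗ y` on `A ⊗ A`. -/
noncomputable def tmulLeft {A : Type*} [NormedRing A] [NormedAlgebra ℂ A] (a : A) :
    A ⊗[ℂ] A →ₗ[ℂ] A ⊗[ℂ] A :=
  TensorProduct.map (LinearMap.mulLeft ℂ a) LinearMap.id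

/-- Right action `(x ⊗ y) • a = x ⊗ (y*a)` on `A ⊗ A`. -/
noncomputable def tmulRight {A : Type*} [NormedRing A] [NormedAlgebra ℂ A] (a : A) :
    A ⊗[ℂ] A →ₗ[ℂ] A ⊗[ℂ] A :=
  TensorProduct.map LinearMap.id (LinearMap.mulRight ℂ a)

/-- Pseudo-amenability: existence of an approximate diagonal.  (Since the algebraic
tensor product is dense in `A ⊗̂ A` in the projective norm, the approximate diagonal
may be taken in the algebraic tensor product, with the module-action conditions
measured in the projective tensor norm.) -/
def IsPseudoAmenable (A : Type*) [NormedRing A] [NormedAlgebra ℂ A] : Prop :=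
  ∃ (ι : Type) (l : Filter ι), l.NeBot ∧ ∃ m : ι → A ⊗[ℂ] A,
    (∀ a : A, Tendsto (fun i => projNorm A A (tmulLeft a (m i) - tmulRight a (m i)))
        l (nhds 0)) ∧
    (∀ a : A, Tendsto (fun i => a * LinearMap.mul' ℂ A (m i)) l (nhds a))

/-- A witness for biprojectivity of `A`: a realization `X` of the completed projective
tensor product `A ⊗̂ A` (with its bimodule actions and multiplication map `pihat`),
together with a bounded bimodule homomorphism `rho : A → A ⊗̂ A` with `π ∘ ρ = id`. -/
structure BiprojectiveWitness (A : Type*) [NormedRing A] [NormedAlgebra ℂ A] where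
  X : Type
  [grp : NormedAddCommGroup X]
  [mod : NormedSpace ℂ X]
  [compl : CompleteSpace X]
  incl : A ⊗[ℂ] A →ₗ[ℂ] X
  dense_incl : DenseRange incl
  norm_incl : ∀ u, ‖incl u‖ = projNorm A A u
  lact : A →L[ℂ] X →L[ℂ] X
  ract : A →L[ℂ] X →L[ℂ] X
  bimod : IsBimodule lact ract
  lact_incl : ∀ (a : A) u, lact a (incl u) = incl (tmulLeft a u)
  ract_incl : ∀ (a : A) u, ract a (incl u) = incl (tmulRight a u)
  pihat : X →L[ℂ] A
  pihat_incl : ∀ u, pihat (incl u) = LinearMap.mul' ℂ A u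
  rho : A →L[ℂ] X
  rho_left : ∀ a b : A, rho (a * b) = lact a (rho b)
  rho_right : ∀ a b : A, rho (a * b) = ract b (rho a)
  pihat_rho : ∀ a : A, pihat (rho a) = a

attribute [instance] BiprojectiveWitness.grp BiprojectiveWitness.mod
  BiprojectiveWitness.compl

/-- `A` is biprojective. -/
def IsBiprojective (A : Type*) [NormedRing A] [NormedAlgebra ℂ A] : Prop :=
  Nonempty (BiprojectiveWitness A)

/-- A witness for biflatness of `A`: a realization `X` of `A ⊗̂ A` together with a
bounded bimodule homomorphism `rho : A → (A ⊗̂ A)**` with `π** ∘ ρ = k_A`. -/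
structure BiflatWitness (A : Type*) [NormedRing A] [NormedAlgebra ℂ A] where
  X : Type
  [grp : NormedAddCommGroup X]
  [mod : NormedSpace ℂ X]
  [compl : CompleteSpace X]
  incl : A ⊗[ℂ] A →ₗ[ℂ] X
  dense_incl : DenseRange incl
  norm_incl : ∀ u, ‖incl u‖ = projNorm A A u
  lact : A →L[ℂ] X →L[ℂ] X
  ract : A →L[ℂ] X →L[ℂ] X
  bimod : IsBimodule lact ract
  lact_incl : ∀ (a : A) u, lact a (incl u) = incl (tmulLeft a u)
  ract_incl : ∀ (a : A) u, ract a (incl u) = incl (tmulRight a u)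
  pihat : X →L[ℂ] A
  pihat_incl : ∀ u, pihat (incl u) = LinearMap.mul' ℂ A u
  rho : A →L[ℂ] ((X →L[ℂ] ℂ) →L[ℂ] ℂ)
  rho_left : ∀ (a b : A) (f : X →L[ℂ] ℂ), rho (a * b) f = rho b (f.comp (lact a))
  rho_right : ∀ (a b : A) (f : X →L[ℂ] ℂ), rho (a * b) f = rho a (f.comp (ract b))
  pihat_rho : ∀ (a : A) (g : A →L[ℂ] ℂ), rho a (g.comp pihat) = g a

/-- `A` is biflat. -/
def IsBiflat (A : Type*) [NormedRing A] [NormedAlgebra ℂ A] : Prop :=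
  Nonempty (BiflatWitness A)

/-- A realization of the completed projective tensor product `A ⊗̂ B` of two Banach
spaces: a Banach space in which the algebraic tensor product sits densely and
isometrically for the projective tensor norm. -/
structure ProjTensorWitness (A B : Type*) [NormedAddCommGroup A] [NormedSpace ℂ A]
    [NormedAddCommGroup B] [NormedSpace ℂ B] where
  X : Type
  [grp : NormedAddCommGroup X]
  [mod : NormedSpace ℂ X]
  [compl : CompleteSpace X]
  incl : A ⊗[ℂ] B →ₗ[ℂ] X
  dense_incl : DenseRange incl
  norm_incl : ∀ u, ‖incl u‖ = projNorm A B u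

attribute [instance] ProjTensorWitness.grp ProjTensorWitness.mod ProjTensorWitness.compl

/-- The principal ideal `S¹ s S¹` generated by `s`, inside the unitization `S¹`. -/
def principalIdeal {S : Type*} [Semigroup S] (s : S) : Set (WithOne S) :=
  {x | ∃ u v : WithOne S, x = u * (s : WithOne S) * v}

/-- The Green-type relation `s τ t ↔ S¹sS¹ = S¹tS¹`. -/
def bandTau {S : Type*} [Semigroup S] (s t : S) : Prop :=
  principalIdeal s = principalIdeal t

/-- Amenability of a (topological) group: existence of a left-invariant mean on the
bounded continuous functions. -/
def GroupIsAmenable (G : Type*) [Group G] [TopologicalSpace G] [IsTopologicalGroup G] :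
    Prop :=
  ∃ m : BoundedContinuousFunction G ℝ →L[ℝ] ℝ,
    m 1 = 1 ∧ (∀ f, 0 ≤ f → 0 ≤ m f) ∧
    ∀ (g : G) (f : BoundedContinuousFunction G ℝ),
      m (f.compContinuous ⟨fun x => g * x, continuous_mul_left g⟩) = m f

/-- A characterization of the Beurling algebra `L¹(G, ω)` of a locally compact group
with Haar measure `μ`: a Banach algebra `A` whose elements are represented by
`ω`-integrable functions on `G`, with the weighted `L¹` norm and convolution product. -/
structure GroupBeurlingStructure (G : Type*) [Group G] [MeasurableSpace G]
    (μ : MeasureTheory.Measure G) (ω : G → ℝ) (A : Type*) [NormedRing A] [NormedAlgebra ℂ A] where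
  toFun : A → G → ℂ
  integrable : ∀ a, MeasureTheory.Integrable (fun g => ‖toFun a g‖ * ω g) μ
  map_add : ∀ a b : A, toFun (a + b) =ᶠ[MeasureTheory.ae μ] toFun a + toFun b
  map_smul : ∀ (c : ℂ) (a : A), toFun (c • a) =ᶠ[MeasureTheory.ae μ] c • toFun a
  eq_zero : ∀ a : A, toFun a =ᶠ[MeasureTheory.ae μ] 0 → a = 0
  norm_eq : ∀ a : A, ‖a‖ = ∫ g, ‖toFun a g‖ * ω g ∂μ
  map_mul : ∀ a b : A, toFun (a * b) =ᶠ[MeasureTheory.ae μ]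
    fun x => ∫ t, toFun a t * toFun b (t⁻¹ * x) ∂μ
  surjective : ∀ f : G → ℂ, Measurable f →
    MeasureTheory.Integrable (fun g => ‖f g‖ * ω g) μ → ∃ a, toFun a =ᶠ[MeasureTheory.ae μ] f

/-! For a right zero semigroup `δ_s δ_t = δ_t`, so `ℓ¹(S, ω)` multiplies as `a * b = φ a • b` with
`φ` the augmentation character `a ↦ ∑ₛ aₛ`; for a left zero semigroup `a * b = φ b • a`. As
`φ δ_s = 1` for all `s`, it suffices that pseudo-amenability or amenability makes `φ` injective.
If `(mᵢ)` is an approximate diagonal and `a * b = φ a • b`, then `a * π mᵢ = φ a • π mᵢ → a`, so `a`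
is determined by `φ a`. If `a * b = φ b • a` and `φ a = 0`, the functional `χ ⊗ φ` maps
`a • mᵢ - mᵢ • a` to `φ (π mᵢ) * χ a`, which therefore tends to `0`, while
`χ (a * π mᵢ) = φ (π mᵢ) * χ a` tends to `χ a`. For amenability, every functional `χ` is a
derivation into `ℂ` for the actions `φ` and `0`; it is inner, hence a multiple of `φ`.
Conversely, if `S = {s}` then `A = ℂ δ_s` with `δ_s` idempotent, and `δ_s ⊗ δ_s` is a diagonal. -/

section ProjectiveNorm

variable {E F G : Type*} [NormedAddCommGroup E] [NormedSpace ℂ E]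
  [NormedAddCommGroup F] [NormedSpace ℂ F] [SeminormedAddCommGroup G] [Module ℂ G]

lemma projNorm_zero : projNorm E F 0 = 0 := by
  refine le_antisymm (csInf_le ⟨0, ?_⟩ ⟨0, Fin.elim0, Fin.elim0, by simp, by simp⟩)
    (Real.sInf_nonneg ?_) <;>
  · rintro _ ⟨n, f, g, -, rfl⟩
    positivity

lemma norm_le_mul_projNorm (Φ : E ⊗[ℂ] F →ₗ[ℂ] G) {C : ℝ} (hC : 0 ≤ C)
    (hΦ : ∀ x y, ‖Φ (x ⊗ₜ y)‖ ≤ C * (‖x‖ * ‖y‖)) (u : E ⊗[ℂ] F) :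
    ‖Φ u‖ ≤ C * projNorm E F u := by
  rw [projNorm, ← smul_eq_mul, ← Real.sInf_smul_of_nonneg hC]
  obtain ⟨n, f, g, hu⟩ := TensorProduct.exists_sum_tmul_eq u
  refine le_csInf ⟨_, Set.smul_mem_smul_set ⟨n, f, g, hu, rfl⟩⟩ ?_
  rintro _ ⟨_, ⟨n, f, g, rfl, rfl⟩, rfl⟩
  simp only [map_sum, smul_eq_mul, Finset.mul_sum]
  exact (norm_sum_le _ _).trans (Finset.sum_le_sum fun i _ => hΦ (f i) (g i))

lemma norm_mul'_map_le_projNorm (χ : E →L[ℂ] ℂ) (ψ : F →L[ℂ] ℂ) (u : E ⊗[ℂ] F) :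
    ‖LinearMap.mul' ℂ ℂ (TensorProduct.map (χ : E →ₗ[ℂ] ℂ) (ψ : F →ₗ[ℂ] ℂ) u)‖ ≤
      ‖χ‖ * ‖ψ‖ * projNorm E F u := by
  refine norm_le_mul_projNorm (LinearMap.mul' ℂ ℂ ∘ₗ TensorProduct.map _ _) (by positivity)
    (fun x y => ?_) u
  simp only [LinearMap.comp_apply, TensorProduct.map_tmul, ContinuousLinearMap.coe_coe,
    LinearMap.mul'_apply, norm_mul]
  calc ‖χ x‖ * ‖ψ y‖ ≤ (‖χ‖ * ‖x‖) * (‖ψ‖ * ‖y‖) := by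
        gcongr <;> apply ContinuousLinearMap.le_opNorm
    _ = ‖χ‖ * ‖ψ‖ * (‖x‖ * ‖y‖) := by ring

end ProjectiveNorm

section BanachAlgebra

variable {A : Type*} [NormedRing A] [NormedAlgebra ℂ A]

lemma isPseudoAmenable_of_forall_eq_smul {e : A} (he : e * e = e)
    (hspan : ∀ a, ∃ c : ℂ, a = c • e) : IsPseudoAmenable A := by
  have hmul_e : ∀ a, a * e = a := fun a => by
    obtain ⟨c, rfl⟩ := hspan a
    rw [smul_mul_assoc, he]
  refine ⟨Unit, ⊤, inferInstance, fun _ => e ⊗ₜ e, fun a => ?_, fun a => ?_⟩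
  · obtain ⟨c, rfl⟩ := hspan a
    simp only [tmulLeft, tmulRight, TensorProduct.map_tmul, LinearMap.mulLeft_apply,
      LinearMap.mulRight_apply, LinearMap.id_apply, smul_mul_assoc, mul_smul_comm, he,
      TensorProduct.smul_tmul, sub_self, projNorm_zero]
    exact tendsto_const_nhds
  · simp only [LinearMap.mul'_apply, he, hmul_e]
    exact tendsto_const_nhds

lemma isAmenable_of_forall_eq_smul {e : A} (he : e * e = e)
    (hspan : ∀ a, ∃ c : ℂ, a = c • e) : IsAmenable A := by
  intro E _ _ l r ⟨hl, hr, hlr⟩ D hD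
  have hl_e : ∀ x, l e (l e x) = l e x := fun x => by
    rw [← ContinuousLinearMap.comp_apply, ← hl, he]
  have hr_e : ∀ x, r e (r e x) = r e x := fun x => by
    rw [← ContinuousLinearMap.comp_apply, ← hr, he]
  have hD_e : ∀ x, D e x = D e (r e x) + D e (l e x) := fun x => by
    conv_lhs => rw [← he, hD]
    rfl
  have hD_lr : ∀ x, D e (l e (r e x)) = 0 := fun x => by
    have := hD_e (r e x)
    rwa [hr_e, left_eq_add] at this
  have hD_rl : ∀ x, D e (r e (l e x)) = 0 := fun x => by
    have hcomm := DFunLike.congr_fun (hlr e e) x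
    rw [ContinuousLinearMap.comp_apply, ContinuousLinearMap.comp_apply] at hcomm
    rw [← hcomm, hD_lr]
  refine ⟨(D e).comp (r e) - (D e).comp (l e), fun a => ?_⟩
  obtain ⟨c, rfl⟩ := hspan a
  ext x
  simp only [map_smul, smul_apply, sub_apply, ContinuousLinearMap.comp_apply, ← smul_sub]
  rw [hr_e, hl_e, hD_lr, hD_rl, hD_e x]
  ring

lemma IsPseudoAmenable.injective_of_mul_eq_smul_left (hA : IsPseudoAmenable A)
    (φ : A →L[ℂ] ℂ) (h : ∀ a b, a * b = φ a • b) : Function.Injective φ := by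
  intro a b hab
  obtain ⟨ι, l, hl, m, -, hunit⟩ := hA
  have ha := hunit a
  have hb := hunit b
  simp only [h, hab] at ha hb
  exact tendsto_nhds_unique ha hb

lemma IsPseudoAmenable.injective_of_mul_eq_smul_right (hA : IsPseudoAmenable A)
    (φ : A →L[ℂ] ℂ) (h : ∀ a b, a * b = φ b • a) : Function.Injective φ := by
  rw [injective_iff_map_eq_zero]
  intro a ha
  obtain ⟨ι, l, hl, m, hdiag, hunit⟩ := hA
  refine SeparatingDual.eq_zero_of_forall_dual_eq_zero (R := ℂ) fun χ => ?_
  let Φ := LinearMap.mul' ℂ ℂ ∘ₗ TensorProduct.map (χ : A →ₗ[ℂ] ℂ) (φ : A →ₗ[ℂ] ℂ)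
  have hΦ : ∀ u, Φ (tmulLeft a u - tmulRight a u) = φ (LinearMap.mul' ℂ A u) * χ a := by
    intro u
    induction u with
    | zero => simp
    | tmul x y =>
      simp only [Φ, tmulLeft, tmulRight, TensorProduct.map_tmul, LinearMap.mulLeft_apply,
        LinearMap.mulRight_apply, LinearMap.id_coe, id_eq, h, ha, zero_smul,
        TensorProduct.tmul_zero, sub_zero, LinearMap.coe_comp, Function.comp_apply, map_smul,
        ContinuousLinearMap.coe_coe, smul_eq_mul, LinearMap.mul'_apply]
      ring
    | add u v hu hv => simp only [map_add, hu, hv, add_mul, add_sub_add_comm]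
  have hone : Tendsto (fun i => φ (LinearMap.mul' ℂ A (m i)) * χ a) l (nhds (χ a)) := by
    simpa [Function.comp_def, h] using (χ.continuous.tendsto a).comp (hunit a)
  have hzero : Tendsto (fun i => φ (LinearMap.mul' ℂ A (m i)) * χ a) l (nhds 0) := by
    refine squeeze_zero_norm (fun i => ?_) (by simpa using (hdiag a).const_mul (‖χ‖ * ‖φ‖))
    rw [← hΦ]
    exact norm_mul'_map_le_projNorm χ φ _
  exact tendsto_nhds_unique hone hzero

lemma IsAmenable.exists_eq_mul_sub (hA : IsAmenable A) {ψ₁ ψ₂ χ : A →L[ℂ] ℂ}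
    (h₁ : ∀ a b, ψ₁ (a * b) = ψ₁ a * ψ₁ b) (h₂ : ∀ a b, ψ₂ (a * b) = ψ₂ a * ψ₂ b)
    (hχ : ∀ a b, χ (a * b) = ψ₂ a * χ b + χ a * ψ₁ b) :
    ∃ c : ℂ, ∀ a, χ a = c * (ψ₂ a - ψ₁ a) := by
  let act : (A →L[ℂ] ℂ) → A →L[ℂ] ℂ →L[ℂ] ℂ := fun ψ => ψ.smulRight (.id ℂ ℂ)
  have hact : ∀ ψ a z, act ψ a z = ψ a * z := fun _ _ _ => rfl
  have hbimod : IsBimodule (act ψ₁) (act ψ₂) := by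
    refine ⟨fun a b => ?_, fun a b => ?_, fun a b => ?_⟩ <;>
    · ext
      simp only [ContinuousLinearMap.comp_apply, hact, h₁, h₂]
      ring
  obtain ⟨f, hf⟩ := hA ℂ (act ψ₁) (act ψ₂) hbimod (act χ) fun a b => by
    ext
    simp only [add_apply, ContinuousLinearMap.comp_apply, hact, hχ]
    ring
  have hf_apply : ∀ z, f z = z * f 1 := fun z => by
    rw [← smul_eq_mul, ← map_smul, smul_eq_mul, mul_one]
  refine ⟨f 1, fun a => ?_⟩
  have hfa := DFunLike.congr_fun (hf a) 1
  simp only [sub_apply, ContinuousLinearMap.comp_apply, hact, mul_one] at hfa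
  rw [hfa, hf_apply (ψ₂ a), hf_apply (ψ₁ a)]
  ring

lemma IsAmenable.injective_of_mul_eq_smul_left (hA : IsAmenable A) (φ : A →L[ℂ] ℂ)
    (h : ∀ a b, a * b = φ a • b) : Function.Injective φ := by
  rw [injective_iff_map_eq_zero]
  intro a ha
  refine SeparatingDual.eq_zero_of_forall_dual_eq_zero (R := ℂ) fun χ => ?_
  obtain ⟨c, hc⟩ := hA.exists_eq_mul_sub (ψ₁ := 0) (ψ₂ := φ) (χ := χ)
    (by simp) (by simp [h]) (by simp [h])
  simp [hc, ha]

lemma IsAmenable.injective_of_mul_eq_smul_right (hA : IsAmenable A) (φ : A →L[ℂ] ℂ)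
    (h : ∀ a b, a * b = φ b • a) : Function.Injective φ := by
  rw [injective_iff_map_eq_zero]
  intro a ha
  refine SeparatingDual.eq_zero_of_forall_dual_eq_zero (R := ℂ) fun χ => ?_
  obtain ⟨c, hc⟩ := hA.exists_eq_mul_sub (ψ₁ := φ) (ψ₂ := 0) (χ := χ)
    (by simp [h, mul_comm]) (by simp) (by simp [h, mul_comm])
  simp [hc, ha]

end BanachAlgebra

namespace BeurlingStructure

variable {S : Type*} [Mul S] {ω : S → ℝ} {A : Type*} [NormedRing A] [NormedAlgebra ℂ A]
  (B : BeurlingStructure S ω A)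

lemma delta_injective : Function.Injective B.delta := fun s t hst => by
  simpa [B.coeff_delta, eq_comm] using congr_arg (B.coeff · t) hst

lemma norm_coeff_le (hω : ∀ s, 0 < ω s) (a : A) (u : S) :
    ‖B.coeff a u‖ ≤ (ω u)⁻¹ * ‖a‖ := by
  rw [inv_mul_eq_div, le_div_iff₀ (hω u)]
  by_cases hsum : Summable fun s => ‖B.coeff a s‖ * ω s
  · rw [B.norm_eq a]
    exact hsum.le_tsum u fun s _ => mul_nonneg (norm_nonneg _) (hω s).le
  · have ha : a = 0 := norm_eq_zero.mp <| by rw [B.norm_eq a, tsum_eq_zero_of_not_summable hsum]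
    simp [ha]

noncomputable def coeffCLM (hω : ∀ s, 0 < ω s) (u : S) : A →L[ℂ] ℂ :=
  ((LinearMap.proj u).comp B.coeff).mkContinuous (ω u)⁻¹ (B.norm_coeff_le hω · u)

@[simp]
lemma coeffCLM_apply (hω : ∀ s, 0 < ω s) (u : S) (a : A) : B.coeffCLM hω u a = B.coeff a u :=
  rfl

lemma mul_eq_smul_of_forall_mul_delta {a : A} {c : ℂ} (h : ∀ v, a * B.delta v = c • B.delta v)
    (b : A) : a * b = c • b := by
  have hsum := (ContinuousLinearMap.mul ℂ A a).hasSum (B.hasSum_coeff b)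
  simp only [ContinuousLinearMap.mul_apply', mul_smul_comm, h, smul_comm _ c] at hsum
  exact hsum.unique ((B.hasSum_coeff b).const_smul c)

lemma mul_eq_smul_of_forall_delta_mul {b : A} {c : ℂ} (h : ∀ v, B.delta v * b = c • B.delta v)
    (a : A) : a * b = c • a := by
  have hsum := ((ContinuousLinearMap.mul ℂ A).flip b).hasSum (B.hasSum_coeff a)
  simp only [ContinuousLinearMap.flip_apply, ContinuousLinearMap.mul_apply', smul_mul_assoc, h,
    smul_comm _ c] at hsum
  exact hsum.unique ((B.hasSum_coeff a).const_smul c)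

lemma exists_mul_eq_smul_left_of_rightZero [Nonempty S] (hω : ∀ s, 0 < ω s)
    (hS : ∀ s t : S, s * t = t) :
    ∃ φ : A →L[ℂ] ℂ, (∀ s, φ (B.delta s) = 1) ∧ ∀ a b, a * b = φ a • b := by
  let s₀ := Classical.arbitrary S
  have hsum : ∀ a v, HasSum (fun t => B.coeff a t • B.delta v) (a * B.delta v) := fun a v => by
    simpa only [ContinuousLinearMap.flip_apply, ContinuousLinearMap.mul_apply', smul_mul_assoc,
      B.delta_mul, hS] using ((ContinuousLinearMap.mul ℂ A).flip (B.delta v)).hasSum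
        (B.hasSum_coeff a)
  let φ := (B.coeffCLM hω s₀).comp ((ContinuousLinearMap.mul ℂ A).flip (B.delta s₀))
  have hφ : ∀ a, HasSum (B.coeff a) (φ a) := fun a => by
    simpa [φ, B.coeff_delta] using (B.coeffCLM hω s₀).hasSum (hsum a s₀)
  refine ⟨φ, fun s => by simp [φ, B.delta_mul, hS, B.coeff_delta], fun a => ?_⟩
  exact B.mul_eq_smul_of_forall_mul_delta fun v => (hsum a v).unique ((hφ a).smul_const _)

lemma exists_mul_eq_smul_right_of_leftZero [Nonempty S] (hω : ∀ s, 0 < ω s)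
    (hS : ∀ s t : S, s * t = s) :
    ∃ φ : A →L[ℂ] ℂ, (∀ s, φ (B.delta s) = 1) ∧ ∀ a b, a * b = φ b • a := by
  let s₀ := Classical.arbitrary S
  have hsum : ∀ v b, HasSum (fun t => B.coeff b t • B.delta v) (B.delta v * b) := fun v b => by
    simpa only [ContinuousLinearMap.mul_apply', mul_smul_comm, B.delta_mul, hS] using
      (ContinuousLinearMap.mul ℂ A (B.delta v)).hasSum (B.hasSum_coeff b)
  let φ := (B.coeffCLM hω s₀).comp (ContinuousLinearMap.mul ℂ A (B.delta s₀))
  have hφ : ∀ b, HasSum (B.coeff b) (φ b) := fun b => by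
    simpa [φ, B.coeff_delta] using (B.coeffCLM hω s₀).hasSum (hsum s₀ b)
  refine ⟨φ, fun s => by simp [φ, B.delta_mul, hS, B.coeff_delta], fun a b => ?_⟩
  exact B.mul_eq_smul_of_forall_delta_mul (fun v => (hsum v b).unique ((hφ b).smul_const _)) a

lemma subsingleton_of_injective {φ : A → ℂ} (hφ : Function.Injective φ)
    (hδ : ∀ s, φ (B.delta s) = 1) : Subsingleton S :=
  ⟨fun s t => B.delta_injective (hφ ((hδ s).trans (hδ t).symm))⟩

lemma delta_mul_self [Subsingleton S] (s : S) : B.delta s * B.delta s = B.delta s := by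
  rw [B.delta_mul, Subsingleton.elim (s * s) s]

lemma eq_coeff_smul_delta [Subsingleton S] (a : A) (s : S) : a = B.coeff a s • B.delta s :=
  (B.hasSum_coeff a).unique <| hasSum_single s fun t ht => absurd (Subsingleton.elim t s) ht

lemma exists_mul_eq_smul [Nonempty S] (hω : ∀ s, 0 < ω s)
    (hS : (∀ s t : S, s * t = t) ∨ (∀ s t : S, s * t = s)) :
    ∃ φ : A →L[ℂ] ℂ, (∀ s, φ (B.delta s) = 1) ∧
      ((∀ a b, a * b = φ a • b) ∨ ∀ a b, a * b = φ b • a) := by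
  rcases hS with hS | hS
  · obtain ⟨φ, hδ, hφ⟩ := B.exists_mul_eq_smul_left_of_rightZero hω hS
    exact ⟨φ, hδ, .inl hφ⟩
  · obtain ⟨φ, hδ, hφ⟩ := B.exists_mul_eq_smul_right_of_leftZero hω hS
    exact ⟨φ, hδ, .inr hφ⟩

end BeurlingStructure

theorem stmt16_general (S : Type) [Mul S] [Nonempty S]
    (hS : (∀ s t : S, s * t = t) ∨ (∀ s t : S, s * t = s))
    (ω : S → ℝ) (hω : IsWeight ω)
    (A : Type) [NormedRing A] [NormedAlgebra ℂ A]
    (B : BeurlingStructure S ω A) :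
    List.TFAE [IsPseudoAmenable A, Subsingleton S, IsAmenable A] := by
  let s₀ := Classical.arbitrary S
  tfae_have 2 → 1 := fun _ => isPseudoAmenable_of_forall_eq_smul (B.delta_mul_self s₀)
    fun a => ⟨_, B.eq_coeff_smul_delta a s₀⟩
  tfae_have 2 → 3 := fun _ => isAmenable_of_forall_eq_smul (B.delta_mul_self s₀)
    fun a => ⟨_, B.eq_coeff_smul_delta a s₀⟩
  obtain ⟨φ, hδ, hφ⟩ := B.exists_mul_eq_smul hω.1 hS
  tfae_have 1 → 2 := fun hA => B.subsingleton_of_injective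
    (hφ.elim (hA.injective_of_mul_eq_smul_left φ) (hA.injective_of_mul_eq_smul_right φ)) hδ
  tfae_have 3 → 2 := fun hA => B.subsingleton_of_injective
    (hφ.elim (hA.injective_of_mul_eq_smul_left φ) (hA.injective_of_mul_eq_smul_right φ)) hδ
  tfae_finish

/-- For a right zero (or left zero) semigroup `S` with weight `ω`, TFAE:
(i) `ℓ¹(S,ω)` is pseudo-amenable; (ii) `S` is a singleton; (iii) `ℓ¹(S,ω)` is
amenable. -/
theorem stmt16 (S : Type) [Mul S] [Nonempty S]
    (hS : (∀ s t : S, s * t = t) ∨ (∀ s t : S, s * t = s))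
    (ω : S → ℝ) (hω : IsWeight ω)
    (A : Type) [NormedRing A] [NormedAlgebra ℂ A] [CompleteSpace A]
    (B : BeurlingStructure S ω A) :
    List.TFAE [IsPseudoAmenable A, Subsingleton S, IsAmenable A] :=
  stmt16_general S hS ω hω A B
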